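/- For every c ∈ [−1,1]: (i) S⁺_c and S⁻_c map [0,2] into [0,2], and S⁻_c maps [0,2] into [0,1]; (ii) if c ≠ 0 then R_c(S⁺_c(w)) = w and R_c(S⁻_c(w)) = w for every w ∈ [0,2]; (iii) if c ∈ [0,1] then for all w₁, w₂ ∈ [0,1], |S⁻_c(w₁) − S⁻_c(w₂)| ≤ (c/(2√2))·|w₁ − w₂|; in particular S⁻_c is a strict contraction of [0,1] with contraction ratio at most 1/(2√2). -/

import Mathlib

/-- The inverse branch `S⁺_c(w) = 1 + (1/√2)·√(1 + (1−w)c)` of the spectral decimation map. -/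
noncomputable def Splus (c w : ℝ) : ℝ := 1 + (Real.sqrt 2)⁻¹ * Real.sqrt (1 + (1 - w) * c)

/-- The inverse branch `S⁻_c(w) = 1 − (1/√2)·√(1 + (1−w)c)` of the spectral decimation map. -/
noncomputable def Sminus (c w : ℝ) : ℝ := 1 - (Real.sqrt 2)⁻¹ * Real.sqrt (1 + (1 - w) * c)

/-- The spectral decimation map `R_c(z) = (−2z² + 4z − 1 + c)/c`. -/
noncomputable def Rc (c z : ℝ) : ℝ := (-2 * z ^ 2 + 4 * z - 1 + c) / c

/-! `S±_c(w) = 1 ± t` with `t ≥ 0` and `2t² = 1 + (1−w)c`, while `R_c(1 + t) = (1 + c − 2t²)/c`,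
so both branches invert `R_c`; for `w ∈ [0, 2]` and `|c| ≤ 1` the radicand lies in `[0, 2]`,
whence `t ∈ [0, 1]`. For `c ≥ 0` and `w ≤ 1` the radicand is at least `1`, where `√` is
`1/2`-Lipschitz, and it depends on `w` with slope `−c`; this gives the ratio `c/(2√2)`. -/

open Real Set

lemma abs_sqrt_sub_sqrt_le_half {a b : ℝ} (ha : 1 ≤ a) (hb : 1 ≤ b) :
    |√a - √b| ≤ |a - b| / 2 := by
  have hfactor : (√a - √b) * (√a + √b) = a - b := by
    linear_combination sq_sqrt (zero_le_one.trans ha) - sq_sqrt (zero_le_one.trans hb)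
  have hsum : 2 ≤ √a + √b := by linarith [one_le_sqrt.2 ha, one_le_sqrt.2 hb]
  rw [le_div_iff₀ two_pos, ← hfactor, abs_mul, abs_of_pos (show 0 < √a + √b by linarith)]
  gcongr

lemma one_add_sub_mul_mem_Icc {c w : ℝ} (hc : c ∈ Icc (-1 : ℝ) 1) (hw : w ∈ Icc (0 : ℝ) 2) :
    1 + (1 - w) * c ∈ Icc (0 : ℝ) 2 := by
  obtain ⟨hc₁, hc₂⟩ := hc
  obtain ⟨hw₀, hw₂⟩ := hw
  constructor <;> nlinarith

lemma inv_sqrt_two_mul_sqrt_mem_Icc {x : ℝ} (hx : x ≤ 2) : (√2)⁻¹ * √x ∈ Icc (0 : ℝ) 1 := by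
  refine ⟨by positivity, ?_⟩
  rw [inv_mul_le_iff₀ (by positivity), mul_one]
  exact sqrt_le_sqrt hx

lemma two_mul_sq_inv_sqrt_two_mul_sqrt {x : ℝ} (hx : 0 ≤ x) : 2 * ((√2)⁻¹ * √x) ^ 2 = x := by
  rw [mul_pow, inv_pow, sq_sqrt zero_le_two, sq_sqrt hx]
  field_simp

lemma Splus_mem_Icc {c w : ℝ} (hc : c ∈ Icc (-1 : ℝ) 1) (hw : w ∈ Icc (0 : ℝ) 2) :
    Splus c w ∈ Icc (1 : ℝ) 2 := by
  obtain ⟨ht₀, ht₁⟩ := inv_sqrt_two_mul_sqrt_mem_Icc (one_add_sub_mul_mem_Icc hc hw).2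
  exact ⟨by unfold Splus; linarith, by unfold Splus; linarith⟩

lemma Sminus_mem_Icc {c w : ℝ} (hc : c ∈ Icc (-1 : ℝ) 1) (hw : w ∈ Icc (0 : ℝ) 2) :
    Sminus c w ∈ Icc (0 : ℝ) 1 := by
  obtain ⟨ht₀, ht₁⟩ := inv_sqrt_two_mul_sqrt_mem_Icc (one_add_sub_mul_mem_Icc hc hw).2
  exact ⟨by unfold Sminus; linarith, by unfold Sminus; linarith⟩

lemma Rc_eq_of_two_mul_sub_one_sq {c w z : ℝ} (hc : c ≠ 0)
    (h : 2 * (z - 1) ^ 2 = 1 + (1 - w) * c) : Rc c z = w := by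
  rw [Rc, div_eq_iff hc]
  linear_combination -h

lemma Rc_Splus {c w : ℝ} (hc : c ≠ 0) (hx : 0 ≤ 1 + (1 - w) * c) : Rc c (Splus c w) = w :=
  Rc_eq_of_two_mul_sub_one_sq hc <| by
    rw [Splus, add_sub_cancel_left]
    exact two_mul_sq_inv_sqrt_two_mul_sqrt hx

lemma Rc_Sminus {c w : ℝ} (hc : c ≠ 0) (hx : 0 ≤ 1 + (1 - w) * c) : Rc c (Sminus c w) = w :=
  Rc_eq_of_two_mul_sub_one_sq hc <| by
    rw [Sminus, sub_sub_cancel_left, neg_sq]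
    exact two_mul_sq_inv_sqrt_two_mul_sqrt hx

lemma abs_Sminus_sub_Sminus_le {c w₁ w₂ : ℝ} (hc : 0 ≤ c) (hw₁ : w₁ ≤ 1) (hw₂ : w₂ ≤ 1) :
    |Sminus c w₁ - Sminus c w₂| ≤ c / (2 * √2) * |w₁ - w₂| := by
  have hx₁ : 1 ≤ 1 + (1 - w₁) * c := le_add_of_nonneg_right (mul_nonneg (sub_nonneg.2 hw₁) hc)
  have hx₂ : 1 ≤ 1 + (1 - w₂) * c := le_add_of_nonneg_right (mul_nonneg (sub_nonneg.2 hw₂) hc)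
  calc |Sminus c w₁ - Sminus c w₂|
      = (√2)⁻¹ * |√(1 + (1 - w₂) * c) - √(1 + (1 - w₁) * c)| := by
        rw [Sminus, Sminus, sub_sub_sub_cancel_left, ← mul_sub, abs_mul,
          abs_of_pos (by positivity)]
    _ ≤ (√2)⁻¹ * (|1 + (1 - w₂) * c - (1 + (1 - w₁) * c)| / 2) := by
        gcongr
        exact abs_sqrt_sub_sqrt_le_half hx₂ hx₁
    _ = c / (2 * √2) * |w₁ - w₂| := by
        rw [show 1 + (1 - w₂) * c - (1 + (1 - w₁) * c) = c * (w₁ - w₂) by ring, abs_mul,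
          abs_of_nonneg hc]
        field_simp

/-- Basic properties of the inverse branches of the spectral decimation map: (i) `S±_c`
map `[0,2]` into `[0,2]`, and `S⁻_c` maps `[0,2]` into `[0,1]`; (ii) for `c ≠ 0` they are
right inverses of `R_c` on `[0,2]`; (iii) for `c ∈ [0,1]`, `S⁻_c` is `c/(2√2)`-Lipschitz
on `[0,1]`, in particular a strict contraction with ratio at most `1/(2√2)`. -/
theorem stmt13 (c : ℝ) (hc : c ∈ Set.Icc (-1 : ℝ) 1) :
    (∀ w ∈ Set.Icc (0 : ℝ) 2,
        Splus c w ∈ Set.Icc (0 : ℝ) 2 ∧ Sminus c w ∈ Set.Icc (0 : ℝ) 2 ∧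
          Sminus c w ∈ Set.Icc (0 : ℝ) 1) ∧
    (c ≠ 0 → ∀ w ∈ Set.Icc (0 : ℝ) 2, Rc c (Splus c w) = w ∧ Rc c (Sminus c w) = w) ∧
    (c ∈ Set.Icc (0 : ℝ) 1 → ∀ w₁ ∈ Set.Icc (0 : ℝ) 1, ∀ w₂ ∈ Set.Icc (0 : ℝ) 1,
        |Sminus c w₁ - Sminus c w₂| ≤ c / (2 * Real.sqrt 2) * |w₁ - w₂| ∧
        |Sminus c w₁ - Sminus c w₂| ≤ 1 / (2 * Real.sqrt 2) * |w₁ - w₂|) := by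
  refine ⟨fun w hw => ?_, fun hc₀ w hw => ?_, fun ⟨hc₀, hc₁⟩ w₁ hw₁ w₂ hw₂ => ?_⟩
  · have hminus := Sminus_mem_Icc hc hw
    exact ⟨Icc_subset_Icc_left zero_le_one (Splus_mem_Icc hc hw),
      Icc_subset_Icc_right one_le_two hminus, hminus⟩
  · have hx := (one_add_sub_mul_mem_Icc hc hw).1
    exact ⟨Rc_Splus hc₀ hx, Rc_Sminus hc₀ hx⟩
  · have hlip := abs_Sminus_sub_Sminus_le hc₀ hw₁.2 hw₂.2
    exact ⟨hlip, hlip.trans (by gcongr)⟩
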